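/- The function z₃(x₁,x₂) = −(|b|/4) sign(x₂) − (|b|/2π) arctan(x₁/x₂) satisfies, in the sense of distributions on ℝ², the equation Δz₃ = −|b| H(x₁) δ′(x₂), i.e. its distributional Laplacian equals −|b| times H(x₁) ⊗ δ′(x₂). -/

import Mathlib

open MeasureTheory Real

/-- Partial derivative in direction `j` of a scalar field on `Fin 2 → ℝ`. -/
noncomputable def pd (j : Fin 2) (f : (Fin 2 → ℝ) → ℝ) (x : Fin 2 → ℝ) : ℝ :=
  fderiv ℝ f x (Pi.single j 1)

open Filter Topology

noncomputable def Zf (b s t : ℝ) : ℝ :=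
  -(b / 4) * (if 0 < t then 1 else -1) - (b / (2 * π)) * (if t = 0 then 0 else arctan (s / t))

lemma Zf_abs_le (b s t : ℝ) (hb : 0 < b) : |Zf b s t| ≤ b / 2 := by
  have h1 : |(if 0 < t then (1:ℝ) else -1)| ≤ 1 := by split <;> simp
  have h2 : |(if t = 0 then (0:ℝ) else arctan (s / t))| ≤ π / 2 := by
    split
    · simpa using (by positivity : (0:ℝ) ≤ π/2)
    · rw [abs_le]; constructor
      · linarith [neg_pi_div_two_lt_arctan (s/t)]
      · linarith [arctan_lt_pi_div_two (s/t)]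
  have := abs_sub (-(b/4) * (if 0 < t then (1:ℝ) else -1))
      ((b / (2 * π)) * (if t = 0 then 0 else arctan (s / t)))
  have e1 : |(-(b/4)) * (if 0 < t then (1:ℝ) else -1)| ≤ b/4 := by
    rw [abs_mul]
    calc |(-(b/4))| * |(if 0 < t then (1:ℝ) else -1)| ≤ |(-(b/4))| * 1 := by
          apply mul_le_mul_of_nonneg_left h1 (abs_nonneg _)
      _ = b/4 := by rw [mul_one, abs_neg, abs_of_nonneg (by linarith)]
  have e2 : |(b / (2*π)) * (if t = 0 then (0:ℝ) else arctan (s / t))| ≤ b/4 := by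
    rw [abs_mul]
    have hπ : (0:ℝ) < π := pi_pos
    have hc : |b / (2*π)| = b/(2*π) := abs_of_nonneg (by positivity)
    calc |b/(2*π)| * |(if t = 0 then (0:ℝ) else arctan (s / t))| ≤ (b/(2*π)) * (π/2) := by
          rw [hc]; apply mul_le_mul_of_nonneg_left h2 (by positivity)
      _ = b/4 := by field_simp; ring
  calc |Zf b s t| ≤ _ + _ := this
    _ ≤ b/2 := by linarith

lemma measurable_Zf (b : ℝ) : Measurable (fun p : ℝ × ℝ => Zf b p.1 p.2) := by
  unfold Zf
  apply Measurable.sub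
  · exact (measurable_const.ite (measurableSet_lt measurable_const measurable_snd)
      measurable_const).const_mul _
  · exact ((measurable_const.ite (measurableSet_eq_fun measurable_snd measurable_const)
      ((measurable_fst.div measurable_snd).arctan))).const_mul _

lemma Zf_of_pos (b s t : ℝ) (ht : 0 < t) :
    Zf b s t = -(b/4) - (b / (2 * π)) * arctan (s / t) := by
  unfold Zf; rw [if_pos ht, if_neg (ne_of_gt ht)]; ring

lemma Zf_of_neg (b s t : ℝ) (ht : t < 0) :
    Zf b s t = b/4 - (b / (2 * π)) * arctan (s / t) := by
  unfold Zf; rw [if_neg (not_lt.2 ht.le), if_neg (ne_of_lt ht)]; ring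

/-- t-derivative of arctan (s/t) is -s/(s²+t²) -/
lemma hasDerivAt_arctan_div_t (s t : ℝ) (ht : t ≠ 0) :
    HasDerivAt (fun t => arctan (s / t)) (-s / (s^2 + t^2)) t := by
  have h0 : s^2 + t^2 ≠ 0 := by positivity
  have h1 : HasDerivAt (fun t : ℝ => s / t) (-(s / t^2)) t := by
    simpa [div_eq_mul_inv, mul_comm] using ((hasDerivAt_inv ht).const_mul s)
  have h2 := (Real.hasDerivAt_arctan (s / t)).comp t h1
  refine h2.congr_deriv ?_
  have ht2 : (t:ℝ)^2 ≠ 0 := pow_ne_zero 2 ht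
  field_simp
  ring

/-- s-derivative of arctan (s/t) is t/(s²+t²) -/
lemma hasDerivAt_arctan_div_s (s t : ℝ) (ht : t ≠ 0) :
    HasDerivAt (fun s => arctan (s / t)) (t / (s^2 + t^2)) s := by
  have h0 : s^2 + t^2 ≠ 0 := by positivity
  have h1 : HasDerivAt (fun s : ℝ => s / t) (1 / t) s := by
    simpa [div_eq_mul_inv] using (hasDerivAt_id s).mul_const t⁻¹
  have h2 := (Real.hasDerivAt_arctan (s / t)).comp s h1
  refine h2.congr_deriv ?_
  field_simp
  ring

/-- t-derivative of Zf -/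
lemma hasDerivAt_Zf_t (b s t : ℝ) (ht : t ≠ 0) :
    HasDerivAt (fun t => Zf b s t) ((b / (2*π)) * (s / (s^2 + t^2))) t := by
  have key : HasDerivAt (fun t => Zf b s t) (-((b / (2*π)) * (-s / (s^2 + t^2)))) t := by
    rcases ht.lt_or_gt with h | h
    · have heq : (fun t => Zf b s t) =ᶠ[nhds t] (fun t => b/4 - (b / (2 * π)) * arctan (s / t)) := by
        filter_upwards [Iio_mem_nhds h] with x hx
        exact Zf_of_neg b s x hx
      have : HasDerivAt (fun t => b/4 - (b / (2 * π)) * arctan (s / t))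
          (-((b / (2*π)) * (-s / (s^2 + t^2)))) t := by
        simpa using (((hasDerivAt_arctan_div_t s t ht).const_mul (b / (2*π))).const_sub (b/4))
      exact this.congr_of_eventuallyEq heq
    · have heq : (fun t => Zf b s t) =ᶠ[nhds t] (fun t => -(b/4) - (b / (2 * π)) * arctan (s / t)) := by
        filter_upwards [Ioi_mem_nhds h] with x hx
        exact Zf_of_pos b s x hx
      have : HasDerivAt (fun t => -(b/4) - (b / (2 * π)) * arctan (s / t))
          (-((b / (2*π)) * (-s / (s^2 + t^2)))) t := by
        simpa using (((hasDerivAt_arctan_div_t s t ht).const_mul (b / (2*π))).const_sub (-(b/4)))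
      exact this.congr_of_eventuallyEq heq
  convert key using 1
  ring_nf

/-- s-derivative of Zf -/
lemma hasDerivAt_Zf_s (b s t : ℝ) (ht : t ≠ 0) :
    HasDerivAt (fun s => Zf b s t) (-((b / (2*π)) * (t / (s^2 + t^2)))) s := by
  have heq : (fun s => Zf b s t) = (fun s => -(b / 4) * (if 0 < t then 1 else -1)
      - (b / (2 * π)) * arctan (s / t)) := by
    funext x; unfold Zf; rw [if_neg ht]
  rw [heq]
  exact ((hasDerivAt_arctan_div_s s t ht).const_mul (b / (2*π))).const_sub _

/-- second derivatives of the kernel pieces -/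
lemma hasDerivAt_Z2_t (c s t : ℝ) (h : s^2 + t^2 ≠ 0) :
    HasDerivAt (fun t => c * (s / (s^2 + t^2))) (c * (-2*s*t / (s^2+t^2)^2)) t := by
  have h1 : HasDerivAt (fun t : ℝ => s^2 + t^2) (2*t) t := by
    simpa using ((hasDerivAt_pow 2 t).const_add (s^2))
  have h2 := ((hasDerivAt_const t s).div h1 h)
  have e : c * (-2*s*t/(s^2+t^2)^2) = c * ((0 * (s^2+t^2) - s*(2*t)) / (s^2+t^2)^2) := by ring
  rw [e]; exact h2.const_mul c

lemma hasDerivAt_Z1_s (c s t : ℝ) (h : s^2 + t^2 ≠ 0) :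
    HasDerivAt (fun s => -(c * (t / (s^2 + t^2)))) (c * (2*s*t / (s^2+t^2)^2)) s := by
  have h1 : HasDerivAt (fun s : ℝ => s^2 + t^2) (2*s) s := by
    simpa using ((hasDerivAt_pow 2 s).add_const (t^2))
  have h2 := ((hasDerivAt_const s t).div h1 h)
  have e : c * (2*s*t/(s^2+t^2)^2) = -(c * ((0 * (s^2+t^2) - t*(2*s)) / (s^2+t^2)^2)) := by ring
  rw [e]; exact (h2.const_mul c).neg


lemma contDiff_pd (j : Fin 2) (f : (Fin 2 → ℝ) → ℝ) (hf : ContDiff ℝ (⊤ : ℕ∞) f) :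
    ContDiff ℝ (⊤ : ℕ∞) (pd j f) :=
  (hf.fderiv_right (by simp)).clm_apply contDiff_const

lemma support_pd_subset (j : Fin 2) (f : (Fin 2 → ℝ) → ℝ) :
    Function.support (pd j f) ⊆ tsupport f := by
  intro x hx
  apply support_fderiv_subset ℝ (f := f)
  intro hc
  apply hx
  unfold pd
  rw [hc]
  simp

lemma hasCompactSupport_pd (j : Fin 2) (f : (Fin 2 → ℝ) → ℝ) (hf : HasCompactSupport f) :
    HasCompactSupport (pd j f) :=
  HasCompactSupport.of_support_subset_isCompact hf (support_pd_subset j f)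

/-- derivative along the vertical line -/
lemma hasDerivAt_line_t (f : (Fin 2 → ℝ) → ℝ) (hf : Differentiable ℝ f) (s t : ℝ) :
    HasDerivAt (fun t => f ![s, t]) (pd 1 f ![s, t]) t := by
  have hline : HasDerivAt (fun t : ℝ => ![s, t]) (Pi.single 1 1 : Fin 2 → ℝ) t := by
    have h1 : HasDerivAt (fun t : ℝ => ![(s:ℝ), 0] + t • ![(0:ℝ), 1])
        ((1:ℝ) • ![(0:ℝ), 1]) t := ((hasDerivAt_id t).smul_const ![(0:ℝ), 1]).const_add _
    have e1 : (fun t : ℝ => ![(s:ℝ), 0] + t • ![(0:ℝ), 1]) = (fun t : ℝ => ![s, t]) := by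
      funext t; funext i; fin_cases i <;> simp
    have e2 : ((1:ℝ) • ![(0:ℝ), 1]) = (Pi.single 1 1 : Fin 2 → ℝ) := by
      funext i; fin_cases i <;> simp
    rw [e1, e2] at h1; exact h1
  exact (hf.differentiableAt.hasFDerivAt).comp_hasDerivAt t hline

/-- derivative along the horizontal line -/
lemma hasDerivAt_line_s (f : (Fin 2 → ℝ) → ℝ) (hf : Differentiable ℝ f) (s t : ℝ) :
    HasDerivAt (fun s => f ![s, t]) (pd 0 f ![s, t]) s := by
  have hline : HasDerivAt (fun s : ℝ => ![s, t]) (Pi.single 0 1 : Fin 2 → ℝ) s := by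
    have h1 : HasDerivAt (fun s : ℝ => ![(0:ℝ), t] + s • ![(1:ℝ), 0])
        ((1:ℝ) • ![(1:ℝ), 0]) s := ((hasDerivAt_id s).smul_const ![(1:ℝ), 0]).const_add _
    have e1 : (fun s : ℝ => ![(0:ℝ), t] + s • ![(1:ℝ), 0]) = (fun s : ℝ => ![s, t]) := by
      funext s; funext i; fin_cases i <;> simp
    have e2 : ((1:ℝ) • ![(1:ℝ), 0]) = (Pi.single 0 1 : Fin 2 → ℝ) := by
      funext i; fin_cases i <;> simp
    rw [e1, e2] at h1; exact h1
  exact (hf.differentiableAt.hasFDerivAt).comp_hasDerivAt s hline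

lemma continuous_embed : Continuous (fun p : ℝ × ℝ => ![p.1, p.2]) := by
  refine continuous_pi fun i => ?_
  fin_cases i
  · exact continuous_fst
  · exact continuous_snd

section Aux

variable {φ : (Fin 2 → ℝ) → ℝ} {M : ℝ}

lemma tsupport_pd_subset (j : Fin 2) (φ : (Fin 2 → ℝ) → ℝ) :
    tsupport (pd j φ) ⊆ tsupport φ :=
  closure_minimal (support_pd_subset j φ) isClosed_closure

lemma pd_eq_zero_of_nmem (j : Fin 2) {x : Fin 2 → ℝ} (h : x ∉ tsupport φ) : pd j φ x = 0 := by
  by_contra hc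
  exact h (support_pd_subset j φ hc)

lemma pd_pd_eq_zero_of_nmem (j : Fin 2) {x : Fin 2 → ℝ} (h : x ∉ tsupport φ) :
    pd j (pd j φ) x = 0 := by
  by_contra hc
  exact h (tsupport_pd_subset j φ (support_pd_subset j (pd j φ) hc))

lemma nmem_tsupport_of_big (hM : tsupport φ ⊆ Metric.closedBall 0 M) {s t : ℝ}
    (h : M < |s| ∨ M < |t|) : ![s, t] ∉ tsupport φ := by
  intro hmem
  have h2 := hM hmem
  rw [Metric.mem_closedBall, dist_zero_right] at h2
  have hs : |s| ≤ ‖(![s,t] : Fin 2 → ℝ)‖ := by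
    simpa using norm_le_pi_norm (![s,t] : Fin 2 → ℝ) 0
  have ht : |t| ≤ ‖(![s,t] : Fin 2 → ℝ)‖ := by
    simpa using norm_le_pi_norm (![s,t] : Fin 2 → ℝ) 1
  rcases h with h | h <;> linarith

/-- Double integration by parts on an interval. -/
lemma ibp2 {u u' u'' v v' v'' : ℝ → ℝ} {a e : ℝ}
    (hu : ∀ x ∈ Set.uIcc a e, HasDerivAt u (u' x) x)
    (hu' : ∀ x ∈ Set.uIcc a e, HasDerivAt u' (u'' x) x)
    (hv : ∀ x ∈ Set.uIcc a e, HasDerivAt v (v' x) x)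
    (hv' : ∀ x ∈ Set.uIcc a e, HasDerivAt v' (v'' x) x)
    (cu' : ContinuousOn u' (Set.uIcc a e)) (cu'' : ContinuousOn u'' (Set.uIcc a e))
    (cv' : ContinuousOn v' (Set.uIcc a e)) (cv'' : ContinuousOn v'' (Set.uIcc a e)) :
    ∫ x in a..e, u x * v'' x =
      (u e * v' e - u a * v' a) - (u' e * v e - u' a * v a) + ∫ x in a..e, u'' x * v x := by
  have h1 := intervalIntegral.integral_mul_deriv_eq_deriv_mul hu hv'
    (cu'.intervalIntegrable) (cv''.intervalIntegrable)
  have h2 := intervalIntegral.integral_mul_deriv_eq_deriv_mul hu' hv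
    (cu''.intervalIntegrable) (cv'.intervalIntegrable)
  rw [h1, h2]
  ring

end Aux

noncomputable def Wf (b : ℝ) (φ : (Fin 2 → ℝ) → ℝ) (s t : ℝ) : ℝ :=
  Zf b s t * pd 1 (pd 1 φ) ![s, t] - ((b/(2*π)) * (-2*s*t/(s^2+t^2)^2)) * φ ![s, t]

section TLine

variable {φ : (Fin 2 → ℝ) → ℝ} {M : ℝ}

lemma continuous_line_t {f : (Fin 2 → ℝ) → ℝ} (hf : Continuous f) (s : ℝ) :
    Continuous (fun t : ℝ => f ![s, t]) :=
  hf.comp (continuous_embed.comp (Continuous.prodMk_right s))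

lemma continuous_line_s {f : (Fin 2 → ℝ) → ℝ} (hf : Continuous f) (t : ℝ) :
    Continuous (fun s : ℝ => f ![s, t]) :=
  hf.comp (continuous_embed.comp (continuous_id.prodMk continuous_const))

lemma continuousOn_den {A : Set ℝ} (s : ℝ) (hA : ∀ t ∈ A, t ≠ 0) :
    ∀ t ∈ A, s^2 + t^2 ≠ 0 := by
  intro t ht
  have := pow_two_pos_of_ne_zero (hA t ht)
  nlinarith [sq_nonneg s]

lemma continuousOn_arctan_div {A : Set ℝ} (s : ℝ) (hA : ∀ t ∈ A, t ≠ 0) :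
    ContinuousOn (fun t => Real.arctan (s / t)) A :=
  Real.continuous_arctan.comp_continuousOn (continuousOn_const.div continuousOn_id hA)

lemma continuousOn_Zf_pos {b : ℝ} (s : ℝ) {A : Set ℝ} (hA : ∀ t ∈ A, 0 < t) :
    ContinuousOn (fun t => Zf b s t) A := by
  have hg : ContinuousOn (fun t : ℝ => -(b/4) - (b / (2 * π)) * Real.arctan (s / t)) A :=
    continuousOn_const.sub (continuousOn_const.mul
      (continuousOn_arctan_div s (fun t ht => ne_of_gt (hA t ht))))
  exact hg.congr (fun t ht => Zf_of_pos b s t (hA t ht))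

lemma continuousOn_Zf_neg {b : ℝ} (s : ℝ) {A : Set ℝ} (hA : ∀ t ∈ A, t < 0) :
    ContinuousOn (fun t => Zf b s t) A := by
  have hg : ContinuousOn (fun t : ℝ => b/4 - (b / (2 * π)) * Real.arctan (s / t)) A :=
    continuousOn_const.sub (continuousOn_const.mul
      (continuousOn_arctan_div s (fun t ht => ne_of_lt (hA t ht))))
  exact hg.congr (fun t ht => Zf_of_neg b s t (hA t ht))

lemma continuousOn_Z2 {b : ℝ} (s : ℝ) {A : Set ℝ} (hA : ∀ t ∈ A, t ≠ 0) :
    ContinuousOn (fun t : ℝ => (b/(2*π)) * (s/(s^2+t^2))) A :=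
  continuousOn_const.mul (continuousOn_const.div
    ((continuous_const.add (continuous_pow 2)).continuousOn) (continuousOn_den s hA))

lemma continuousOn_Z22 {b : ℝ} (s : ℝ) {A : Set ℝ} (hA : ∀ t ∈ A, t ≠ 0) :
    ContinuousOn (fun t : ℝ => (b/(2*π)) * (-2*s*t/(s^2+t^2)^2)) A := by
  refine continuousOn_const.mul (ContinuousOn.div ?_ ?_ ?_)
  · exact (continuous_const.mul continuous_id).continuousOn
  · exact ((continuous_const.add (continuous_pow 2)).pow 2).continuousOn
  · intro t ht
    exact pow_ne_zero 2 (continuousOn_den s hA t ht)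

lemma continuousOn_Wf_pos {b : ℝ} (hφ : ContDiff ℝ (⊤:ℕ∞) φ) (s : ℝ) {A : Set ℝ}
    (hA : ∀ t ∈ A, 0 < t) : ContinuousOn (fun t => Wf b φ s t) A := by
  have hcpp : Continuous (pd 1 (pd 1 φ)) := (contDiff_pd 1 (pd 1 φ) (contDiff_pd 1 φ hφ)).continuous
  exact ((continuousOn_Zf_pos s hA).mul (continuous_line_t hcpp s).continuousOn).sub
    ((continuousOn_Z22 s (fun t ht => ne_of_gt (hA t ht))).mul
      (continuous_line_t hφ.continuous s).continuousOn)

lemma continuousOn_Wf_neg {b : ℝ} (hφ : ContDiff ℝ (⊤:ℕ∞) φ) (s : ℝ) {A : Set ℝ}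
    (hA : ∀ t ∈ A, t < 0) : ContinuousOn (fun t => Wf b φ s t) A := by
  have hcpp : Continuous (pd 1 (pd 1 φ)) := (contDiff_pd 1 (pd 1 φ) (contDiff_pd 1 φ hφ)).continuous
  exact ((continuousOn_Zf_neg s hA).mul (continuous_line_t hcpp s).continuousOn).sub
    ((continuousOn_Z22 s (fun t ht => ne_of_lt (hA t ht))).mul
      (continuous_line_t hφ.continuous s).continuousOn)

lemma t_line_upper (b : ℝ) (hφ : ContDiff ℝ (⊤:ℕ∞) φ)
    (hM : tsupport φ ⊆ Metric.closedBall 0 M) (hM0 : 0 < M)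
    {ε : ℝ} (hε : 0 < ε) (hεM : ε ≤ M) (s : ℝ) :
    ∫ t in Set.Ioi ε, Wf b φ s t =
      -(Zf b s ε * pd 1 φ ![s, ε]) + (b/(2*π)) * (s/(s^2+ε^2)) * φ ![s, ε] := by
  have hdφ : Differentiable ℝ φ := hφ.differentiable (by simp)
  have hdp : Differentiable ℝ (pd 1 φ) := (contDiff_pd 1 φ hφ).differentiable (by simp)
  set M' : ℝ := M + 1 with hM'def
  have hMM' : M < M' := by simp [hM'def]
  have hle : ε ≤ M' := by linarith
  have hzero : ∀ t : ℝ, M < |t| →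
      φ ![s, t] = 0 ∧ pd 1 φ ![s, t] = 0 ∧ pd 1 (pd 1 φ) ![s, t] = 0 := by
    intro t h3
    have hn := nmem_tsupport_of_big hM (s := s) (t := t) (Or.inr h3)
    exact ⟨image_eq_zero_of_notMem_tsupport hn, pd_eq_zero_of_nmem 1 hn,
      pd_pd_eq_zero_of_nmem 1 hn⟩
  have hWzero : ∀ t : ℝ, M < |t| → Wf b φ s t = 0 := by
    intro t ht
    obtain ⟨h1, h2, h3⟩ := hzero t ht
    simp [Wf, h1, h3]
  have hIccpos : ∀ t ∈ Set.Icc ε M', 0 < t := fun t ht => lt_of_lt_of_le hε ht.1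
  have hWcont : ContinuousOn (fun t => Wf b φ s t) (Set.Icc ε M') :=
    continuousOn_Wf_pos hφ s hIccpos
  -- split the integral
  have hsplit : Set.Ioi ε = Set.Ioc ε M' ∪ Set.Ioi M' := (Set.Ioc_union_Ioi_eq_Ioi hle).symm
  have hInt1 : MeasureTheory.IntegrableOn (fun t => Wf b φ s t) (Set.Ioc ε M') :=
    (hWcont.integrableOn_Icc).mono_set Set.Ioc_subset_Icc_self
  have hInt2 : MeasureTheory.IntegrableOn (fun t => Wf b φ s t) (Set.Ioi M') := by
    apply MeasureTheory.integrableOn_zero.congr_fun (fun t ht => ?_) measurableSet_Ioi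
    exact (hWzero t (lt_of_lt_of_le (lt_of_lt_of_le hMM' (le_of_lt ht)) (le_abs_self t))).symm
  have h0 : ∫ t in Set.Ioi M', Wf b φ s t = 0 :=
    MeasureTheory.setIntegral_eq_zero_of_forall_eq_zero
      (fun t ht => hWzero t (lt_of_lt_of_le (lt_of_lt_of_le hMM' (le_of_lt ht)) (le_abs_self t)))
  have heq1 : ∫ t in Set.Ioi ε, Wf b φ s t = ∫ t in Set.Ioc ε M', Wf b φ s t := by
    rw [hsplit, MeasureTheory.setIntegral_union (Set.Ioc_disjoint_Ioi le_rfl)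
      measurableSet_Ioi hInt1 hInt2, h0, add_zero]
  rw [heq1, ← intervalIntegral.integral_of_le hle]
  -- integration by parts
  have huIcc : Set.uIcc ε M' = Set.Icc ε M' := Set.uIcc_of_le hle
  have hne : ∀ x ∈ Set.uIcc ε M', x ≠ 0 := by
    rw [huIcc]; exact fun x hx => ne_of_gt (hIccpos x hx)
  have hibp := ibp2 (u := fun t => Zf b s t) (u' := fun t => (b/(2*π)) * (s/(s^2+t^2)))
      (u'' := fun t => (b/(2*π)) * (-2*s*t/(s^2+t^2)^2))
      (v := fun t => φ ![s, t]) (v' := fun t => pd 1 φ ![s, t])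
      (v'' := fun t => pd 1 (pd 1 φ) ![s, t]) (a := ε) (e := M')
      (fun x hx => hasDerivAt_Zf_t b s x (hne x hx))
      (fun x hx => hasDerivAt_Z2_t (b/(2*π)) s x (continuousOn_den s hne x hx))
      (fun x hx => hasDerivAt_line_t φ hdφ s x)
      (fun x hx => hasDerivAt_line_t (pd 1 φ) hdp s x)
      (by rw [huIcc]; exact continuousOn_Z2 s (fun t ht => ne_of_gt (hIccpos t ht)))
      (by rw [huIcc]; exact continuousOn_Z22 s (fun t ht => ne_of_gt (hIccpos t ht)))
      (by exact (continuous_line_t ((contDiff_pd 1 φ hφ).continuous) s).continuousOn)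
      (by exact (continuous_line_t ((contDiff_pd 1 (pd 1 φ)
        (contDiff_pd 1 φ hφ)).continuous) s).continuousOn)
  have hsub : ∫ t in ε..M', Wf b φ s t =
      (∫ t in ε..M', Zf b s t * pd 1 (pd 1 φ) ![s, t]) -
      ∫ t in ε..M', ((b/(2*π)) * (-2*s*t/(s^2+t^2)^2)) * φ ![s, t] := by
    apply intervalIntegral.integral_sub
    · apply ContinuousOn.intervalIntegrable
      rw [huIcc]
      exact (continuousOn_Zf_pos s hIccpos).mul (continuous_line_t ((contDiff_pd 1 (pd 1 φ)
        (contDiff_pd 1 φ hφ)).continuous) s).continuousOn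
    · apply ContinuousOn.intervalIntegrable
      rw [huIcc]
      exact (continuousOn_Z22 s (fun t ht => ne_of_gt (hIccpos t ht))).mul
        (continuous_line_t hφ.continuous s).continuousOn
  have hMb : M < |M'| := lt_of_lt_of_le hMM' (le_abs_self M')
  obtain ⟨hz1, hz2, _⟩ := hzero M' hMb
  beta_reduce at hibp
  rw [hsub, hibp, hz1, hz2]
  ring

lemma t_line_lower (b : ℝ) {φ : (Fin 2 → ℝ) → ℝ} {M : ℝ} (hφ : ContDiff ℝ (⊤:ℕ∞) φ)
    (hM : tsupport φ ⊆ Metric.closedBall 0 M) (hM0 : 0 < M)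
    {ε : ℝ} (hε : 0 < ε) (hεM : ε ≤ M) (s : ℝ) :
    ∫ t in Set.Iic (-ε), Wf b φ s t =
      Zf b s (-ε) * pd 1 φ ![s, -ε] - (b/(2*π)) * (s/(s^2+ε^2)) * φ ![s, -ε] := by
  have hdφ : Differentiable ℝ φ := hφ.differentiable (by simp)
  have hdp : Differentiable ℝ (pd 1 φ) :=
    (contDiff_pd 1 φ hφ).differentiable (by simp)
  set M' : ℝ := M + 1 with hM'def
  have hMM' : M < M' := by simp [hM'def]
  have hle : -M' ≤ -ε := by linarith
  have hzero : ∀ t : ℝ, M < |t| →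
      φ ![s, t] = 0 ∧ pd 1 φ ![s, t] = 0 ∧ pd 1 (pd 1 φ) ![s, t] = 0 := by
    intro t h3
    have hn := nmem_tsupport_of_big hM (s := s) (t := t) (Or.inr h3)
    exact ⟨image_eq_zero_of_notMem_tsupport hn, pd_eq_zero_of_nmem 1 hn,
      pd_pd_eq_zero_of_nmem 1 hn⟩
  have hWzero : ∀ t : ℝ, M < |t| → Wf b φ s t = 0 := by
    intro t ht
    obtain ⟨h1, h2, h3⟩ := hzero t ht
    simp [Wf, h1, h3]
  have hIccneg : ∀ t ∈ Set.Icc (-M') (-ε), t < 0 := fun t ht => lt_of_le_of_lt ht.2 (by linarith)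
  have hWcont : ContinuousOn (fun t => Wf b φ s t) (Set.Icc (-M') (-ε)) :=
    continuousOn_Wf_neg hφ s hIccneg
  have hsplit : Set.Iic (-ε) = Set.Iic (-M') ∪ Set.Ioc (-M') (-ε) :=
    (Set.Iic_union_Ioc_eq_Iic hle).symm
  have hInt1 : MeasureTheory.IntegrableOn (fun t => Wf b φ s t) (Set.Ioc (-M') (-ε)) :=
    (hWcont.integrableOn_Icc).mono_set Set.Ioc_subset_Icc_self
  have hInt2 : MeasureTheory.IntegrableOn (fun t => Wf b φ s t) (Set.Iic (-M')) := by
    apply MeasureTheory.integrableOn_zero.congr_fun (fun t ht => ?_) measurableSet_Iic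
    refine (hWzero t ?_).symm
    rw [Set.mem_Iic] at ht
    have : M' ≤ |t| := by
      rw [abs_of_nonpos (by linarith)]
      linarith
    linarith
  have h0 : ∫ t in Set.Iic (-M'), Wf b φ s t = 0 := by
    apply MeasureTheory.setIntegral_eq_zero_of_forall_eq_zero
    intro t ht
    refine hWzero t ?_
    rw [Set.mem_Iic] at ht
    have : M' ≤ |t| := by
      rw [abs_of_nonpos (by linarith)]
      linarith
    linarith
  have heq1 : ∫ t in Set.Iic (-ε), Wf b φ s t = ∫ t in Set.Ioc (-M') (-ε), Wf b φ s t := by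
    rw [hsplit, MeasureTheory.setIntegral_union (Set.Iic_disjoint_Ioc le_rfl)
      measurableSet_Ioc hInt2 hInt1, h0, zero_add]
  rw [heq1, ← intervalIntegral.integral_of_le hle]
  have huIcc : Set.uIcc (-M') (-ε) = Set.Icc (-M') (-ε) := Set.uIcc_of_le hle
  have hne : ∀ x ∈ Set.uIcc (-M') (-ε), x ≠ 0 := by
    rw [huIcc]; exact fun x hx => ne_of_lt (hIccneg x hx)
  have hibp := ibp2 (u := fun t => Zf b s t) (u' := fun t => (b/(2*π)) * (s/(s^2+t^2)))
      (u'' := fun t => (b/(2*π)) * (-2*s*t/(s^2+t^2)^2))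
      (v := fun t => φ ![s, t]) (v' := fun t => pd 1 φ ![s, t])
      (v'' := fun t => pd 1 (pd 1 φ) ![s, t]) (a := -M') (e := -ε)
      (fun x hx => hasDerivAt_Zf_t b s x (hne x hx))
      (fun x hx => hasDerivAt_Z2_t (b/(2*π)) s x (continuousOn_den s hne x hx))
      (fun x hx => hasDerivAt_line_t φ hdφ s x)
      (fun x hx => hasDerivAt_line_t (pd 1 φ) hdp s x)
      (by rw [huIcc]; exact continuousOn_Z2 s (fun t ht => ne_of_lt (hIccneg t ht)))
      (by rw [huIcc]; exact continuousOn_Z22 s (fun t ht => ne_of_lt (hIccneg t ht)))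
      (by exact (continuous_line_t ((contDiff_pd 1 φ hφ).continuous) s).continuousOn)
      (by exact (continuous_line_t ((contDiff_pd 1 (pd 1 φ)
        (contDiff_pd 1 φ hφ)).continuous) s).continuousOn)
  have hsub : ∫ t in (-M')..(-ε), Wf b φ s t =
      (∫ t in (-M')..(-ε), Zf b s t * pd 1 (pd 1 φ) ![s, t]) -
      ∫ t in (-M')..(-ε), ((b/(2*π)) * (-2*s*t/(s^2+t^2)^2)) * φ ![s, t] := by
    apply intervalIntegral.integral_sub
    · apply ContinuousOn.intervalIntegrable
      rw [huIcc]
      exact (continuousOn_Zf_neg s hIccneg).mul (continuous_line_t ((contDiff_pd 1 (pd 1 φ)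
        (contDiff_pd 1 φ hφ)).continuous) s).continuousOn
    · apply ContinuousOn.intervalIntegrable
      rw [huIcc]
      exact (continuousOn_Z22 s (fun t ht => ne_of_lt (hIccneg t ht))).mul
        (continuous_line_t hφ.continuous s).continuousOn
  have hMb : M < |(-M' : ℝ)| := by
    rw [abs_neg, abs_of_pos (by linarith)]
    exact hMM'
  obtain ⟨hz1, hz2, _⟩ := hzero (-M') hMb
  beta_reduce at hibp
  rw [hsub, hibp, hz1, hz2]
  have hsq : ((-ε):ℝ)^2 = ε^2 := by ring
  rw [hsq]
  ring

section SLine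

variable {φ : (Fin 2 → ℝ) → ℝ} {M : ℝ}

lemma continuous_Zf_s {b t : ℝ} (ht : t ≠ 0) : Continuous (fun s => Zf b s t) := by
  have heq : (fun s => Zf b s t) = (fun s => -(b / 4) * (if 0 < t then 1 else -1)
      - (b / (2 * π)) * Real.arctan (s / t)) := by
    funext s; unfold Zf; rw [if_neg ht]
  rw [heq]
  exact continuous_const.sub (continuous_const.mul
    (Real.continuous_arctan.comp (continuous_id.div_const t)))

lemma hasCompactSupport_of_vanish {g : ℝ → ℝ} {M : ℝ}
    (hsup : ∀ s : ℝ, M < |s| → g s = 0) :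
    HasCompactSupport g := by
  apply HasCompactSupport.intro (isCompact_Icc (a := -M) (b := M))
  intro s hs
  apply hsup
  rw [Set.mem_Icc, not_and_or] at hs
  rcases hs with h | h
  · rw [lt_abs]; right; linarith
  · rw [lt_abs]; left; linarith

lemma s_line (b : ℝ) (hφ : ContDiff ℝ (⊤:ℕ∞) φ)
    (hM : tsupport φ ⊆ Metric.closedBall 0 M) (hM0 : 0 < M)
    {t : ℝ} (ht : t ≠ 0) :
    ∫ s : ℝ, Zf b s t * pd 0 (pd 0 φ) ![s, t] =
      ∫ s : ℝ, ((b/(2*π)) * (2*s*t/(s^2+t^2)^2)) * φ ![s, t] := by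
  have hdφ : Differentiable ℝ φ := hφ.differentiable (by simp)
  have hdp : Differentiable ℝ (pd 0 φ) :=
    (contDiff_pd 0 φ hφ).differentiable (by simp)
  set M' : ℝ := M + 1 with hM'def
  have hMM' : M < M' := by simp [hM'def]
  have hle : -M' ≤ M' := by linarith
  have hzero : ∀ s : ℝ, M < |s| →
      φ ![s, t] = 0 ∧ pd 0 φ ![s, t] = 0 ∧ pd 0 (pd 0 φ) ![s, t] = 0 := by
    intro s h3
    have hn := nmem_tsupport_of_big hM (s := s) (t := t) (Or.inl h3)
    exact ⟨image_eq_zero_of_notMem_tsupport hn, pd_eq_zero_of_nmem 0 hn,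
      pd_pd_eq_zero_of_nmem 0 hn⟩
  have hout : ∀ s : ℝ, s ∉ Set.Ioc (-M') M' → M < |s| := by
    intro s hs
    rw [Set.mem_Ioc, not_and_or] at hs
    rcases hs with h | h
    · rw [lt_abs]; right; linarith
    · rw [lt_abs]; left; linarith
  have h1 : ∫ s : ℝ, Zf b s t * pd 0 (pd 0 φ) ![s, t] =
      ∫ s in (-M')..M', Zf b s t * pd 0 (pd 0 φ) ![s, t] := by
    rw [intervalIntegral.integral_of_le hle,
      MeasureTheory.setIntegral_eq_integral_of_forall_compl_eq_zero]
    intro s hs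
    rw [(hzero s (hout s hs)).2.2, mul_zero]
  have h2 : ∫ s : ℝ, ((b/(2*π)) * (2*s*t/(s^2+t^2)^2)) * φ ![s, t] =
      ∫ s in (-M')..M', ((b/(2*π)) * (2*s*t/(s^2+t^2)^2)) * φ ![s, t] := by
    rw [intervalIntegral.integral_of_le hle,
      MeasureTheory.setIntegral_eq_integral_of_forall_compl_eq_zero]
    intro s hs
    rw [(hzero s (hout s hs)).1, mul_zero]
  have hden : ∀ s : ℝ, s^2 + t^2 ≠ 0 := by
    intro s
    have := pow_two_pos_of_ne_zero ht
    nlinarith [sq_nonneg s]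
  have hibp := ibp2 (u := fun s => Zf b s t) (u' := fun s => -((b/(2*π)) * (t/(s^2+t^2))))
      (u'' := fun s => (b/(2*π)) * (2*s*t/(s^2+t^2)^2))
      (v := fun s => φ ![s, t]) (v' := fun s => pd 0 φ ![s, t])
      (v'' := fun s => pd 0 (pd 0 φ) ![s, t]) (a := -M') (e := M')
      (fun x _ => hasDerivAt_Zf_s b x t ht)
      (fun x _ => hasDerivAt_Z1_s (b/(2*π)) x t (hden x))
      (fun x _ => hasDerivAt_line_s φ hdφ x t)
      (fun x _ => hasDerivAt_line_s (pd 0 φ) hdp x t)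
      (Continuous.continuousOn (by
        exact (continuous_const.mul ((continuous_const.div
          ((continuous_pow 2).add continuous_const) hden))).neg))
      (Continuous.continuousOn (by
        refine continuous_const.mul (Continuous.div ?_ ?_ ?_)
        · exact ((continuous_const.mul continuous_id).mul continuous_const)
        · exact ((continuous_pow 2).add continuous_const).pow 2
        · exact fun s => pow_ne_zero 2 (hden s)))
      (continuous_line_s ((contDiff_pd 0 φ hφ).continuous) t).continuousOn
      (continuous_line_s ((contDiff_pd 0 (pd 0 φ) (contDiff_pd 0 φ hφ)).continuous) t).continuousOn
  beta_reduce at hibp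
  have hMb : M < |M'| := lt_of_lt_of_le hMM' (le_abs_self M')
  have hMb' : M < |(-M' : ℝ)| := by rw [abs_neg]; exact hMb
  obtain ⟨ha1, ha2, _⟩ := hzero M' hMb
  obtain ⟨hb1, hb2, _⟩ := hzero (-M') hMb'
  rw [h1, h2, hibp, ha1, ha2, hb1, hb2]
  ring

lemma lineF (b : ℝ) (hφ : ContDiff ℝ (⊤:ℕ∞) φ) (hφc : HasCompactSupport φ)
    (hM : tsupport φ ⊆ Metric.closedBall 0 M) (hM0 : 0 < M)
    {t : ℝ} (ht : t ≠ 0) :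
    ∫ s : ℝ, Zf b s t * (pd 0 (pd 0 φ) ![s, t] + pd 1 (pd 1 φ) ![s, t]) =
      ∫ s : ℝ, Wf b φ s t := by
  have hzero : ∀ s : ℝ, M < |s| →
      φ ![s, t] = 0 ∧ pd 0 (pd 0 φ) ![s, t] = 0 ∧ pd 1 (pd 1 φ) ![s, t] = 0 := by
    intro s h3
    have hn := nmem_tsupport_of_big hM (s := s) (t := t) (Or.inl h3)
    exact ⟨image_eq_zero_of_notMem_tsupport hn, pd_pd_eq_zero_of_nmem 0 hn,
      pd_pd_eq_zero_of_nmem 1 hn⟩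
  have hden : ∀ s : ℝ, s^2 + t^2 ≠ 0 := by
    intro s
    have := pow_two_pos_of_ne_zero ht
    nlinarith [sq_nonneg s]
  have hi1 : MeasureTheory.Integrable (fun s => Zf b s t * pd 0 (pd 0 φ) ![s, t]) := by
    apply Continuous.integrable_of_hasCompactSupport
    · exact (continuous_Zf_s ht).mul
        (continuous_line_s ((contDiff_pd 0 (pd 0 φ) (contDiff_pd 0 φ hφ)).continuous) t)
    · exact hasCompactSupport_of_vanish (M := M) (fun s hs => by rw [(hzero s hs).2.1, mul_zero])
  have hi2 : MeasureTheory.Integrable (fun s => Zf b s t * pd 1 (pd 1 φ) ![s, t]) := by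
    apply Continuous.integrable_of_hasCompactSupport
    · exact (continuous_Zf_s ht).mul
        (continuous_line_s ((contDiff_pd 1 (pd 1 φ) (contDiff_pd 1 φ hφ)).continuous) t)
    · exact hasCompactSupport_of_vanish (M := M) (fun s hs => by rw [(hzero s hs).2.2, mul_zero])
  have hi3 : MeasureTheory.Integrable (fun s => ((b/(2*π)) * (2*s*t/(s^2+t^2)^2)) * φ ![s, t]) := by
    apply Continuous.integrable_of_hasCompactSupport
    · refine Continuous.mul ?_ (continuous_line_s hφ.continuous t)
      refine continuous_const.mul (Continuous.div
        ((continuous_const.mul continuous_id).mul continuous_const)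
        (((continuous_pow 2).add continuous_const).pow 2) ?_)
      exact fun s => pow_ne_zero 2 (hden s)
    · exact hasCompactSupport_of_vanish (M := M) (fun s hs => by rw [(hzero s hs).1, mul_zero])
  have step1 : ∫ s : ℝ, Zf b s t * (pd 0 (pd 0 φ) ![s, t] + pd 1 (pd 1 φ) ![s, t]) =
      (∫ s : ℝ, Zf b s t * pd 0 (pd 0 φ) ![s, t]) +
      ∫ s : ℝ, Zf b s t * pd 1 (pd 1 φ) ![s, t] := by
    rw [← MeasureTheory.integral_add hi1 hi2]
    congr 1
    funext s
    ring
  rw [step1, s_line b hφ hM hM0 ht]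
  have step2 : ∀ s : ℝ, Wf b φ s t = ((b/(2*π)) * (2*s*t/(s^2+t^2)^2)) * φ ![s, t]
      + Zf b s t * pd 1 (pd 1 φ) ![s, t] := by
    intro s
    unfold Wf
    ring
  have : ∫ s : ℝ, Wf b φ s t = (∫ s : ℝ, ((b/(2*π)) * (2*s*t/(s^2+t^2)^2)) * φ ![s, t])
      + ∫ s : ℝ, Zf b s t * pd 1 (pd 1 φ) ![s, t] := by
    rw [← MeasureTheory.integral_add hi3 hi2]
    congr 1
    funext s
    exact step2 s
  rw [this]

end SLine

section Swap

variable {φ : (Fin 2 → ℝ) → ℝ} {M : ℝ}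

lemma kernel_bound {s t ε : ℝ} (hε : 0 < ε) (ht : ε ≤ |t|) :
    |(-2*s*t/(s^2+t^2)^2)| ≤ 1/ε^2 := by
  have hd : ε^2 ≤ s^2 + t^2 := by nlinarith [sq_nonneg s, sq_abs t, abs_nonneg t]
  have hd0 : (0:ℝ) < s^2 + t^2 := lt_of_lt_of_le (by positivity) hd
  have habs : |(-2*s*t)| = 2 * |s| * |t| := by
    rw [abs_mul, abs_mul]
    norm_num
  have h2 : 2 * |s| * |t| ≤ s^2 + t^2 := by nlinarith [sq_nonneg (|s| - |t|), sq_abs s, sq_abs t]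
  rw [abs_div, abs_of_pos (by positivity : (0:ℝ) < (s^2+t^2)^2), div_le_div_iff₀ (by positivity)
    (by positivity), habs]
  nlinarith [abs_nonneg s, abs_nonneg t, sq_nonneg ε]

lemma measurable_Wf (b : ℝ) (hφ : ContDiff ℝ (⊤:ℕ∞) φ) :
    Measurable (fun q : ℝ × ℝ => Wf b φ q.1 q.2) := by
  have hcpp : Continuous (pd 1 (pd 1 φ)) :=
    (contDiff_pd 1 (pd 1 φ) (contDiff_pd 1 φ hφ)).continuous
  unfold Wf
  apply Measurable.sub
  · exact (measurable_Zf b).mul ((hcpp.comp continuous_embed).measurable)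
  · refine Measurable.mul ?_ ((hφ.continuous.comp continuous_embed).measurable)
    apply Measurable.const_mul
    apply Measurable.div
    · exact ((measurable_const.mul measurable_fst).mul measurable_snd)
    · exact (((measurable_fst.pow_const 2).add (measurable_snd.pow_const 2)).pow_const 2)

lemma Wf_zero_of_big (b : ℝ) (hM : tsupport φ ⊆ Metric.closedBall 0 M) {s t : ℝ}
    (h : M < |s| ∨ M < |t|) : Wf b φ s t = 0 := by
  have hn := nmem_tsupport_of_big hM (s := s) (t := t) h
  unfold Wf
  rw [image_eq_zero_of_notMem_tsupport hn, pd_pd_eq_zero_of_nmem 1 hn]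
  ring

lemma swap_W (b : ℝ) (hb : 0 < b) (hφ : ContDiff ℝ (⊤:ℕ∞) φ) (hφc : HasCompactSupport φ)
    (hM : tsupport φ ⊆ Metric.closedBall 0 M) (hM0 : 0 < M)
    {ε : ℝ} (hε : 0 < ε) {T : Set ℝ} (hT : MeasurableSet T) (hTsub : ∀ t ∈ T, ε ≤ |t|) :
    ∫ t in T, (∫ s : ℝ, Wf b φ s t) = ∫ s : ℝ, (∫ t in T, Wf b φ s t) := by
  classical
  set f : ℝ → ℝ → ℝ := fun t s => T.indicator (fun t' => Wf b φ s t') t with hf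
  have hcpp : Continuous (pd 1 (pd 1 φ)) :=
    (contDiff_pd 1 (pd 1 φ) (contDiff_pd 1 φ hφ)).continuous
  obtain ⟨C2, hC2⟩ := Continuous.bounded_above_of_compact_support hcpp
    (hasCompactSupport_pd 1 (pd 1 φ) (hasCompactSupport_pd 1 φ hφc))
  obtain ⟨C0, hC0⟩ := Continuous.bounded_above_of_compact_support hφ.continuous hφc
  have hC2' : 0 ≤ C2 := le_trans (norm_nonneg _) (hC2 0)
  have hC0' : 0 ≤ C0 := le_trans (norm_nonneg _) (hC0 0)
  set M' : ℝ := M + 1 with hM'def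
  set C : ℝ := (b/2) * C2 + (b/(2*π)) * (1/ε^2) * C0 with hC
  have hCpos : 0 ≤ C := by
    rw [hC]
    have : 0 < π := Real.pi_pos
    have h1 : (0:ℝ) ≤ (b/2) * C2 := by positivity
    have h2 : (0:ℝ) ≤ (b/(2*π)) * (1/ε^2) * C0 := by positivity
    linarith
  -- the uncurried function and its bound
  have hWbound : ∀ s t : ℝ, ε ≤ |t| → |Wf b φ s t| ≤ C := by
    intro s t ht
    have hπ : (0:ℝ) < π := Real.pi_pos
    have e1 : |Zf b s t * pd 1 (pd 1 φ) ![s, t]| ≤ (b/2) * C2 := by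
      rw [abs_mul]
      apply mul_le_mul (Zf_abs_le b s t hb) ?_ (abs_nonneg _) (by linarith)
      simpa [Real.norm_eq_abs] using hC2 ![s, t]
    have e2 : |((b/(2*π)) * (-2*s*t/(s^2+t^2)^2)) * φ ![s, t]| ≤ (b/(2*π)) * (1/ε^2) * C0 := by
      rw [abs_mul, abs_mul]
      have k1 : |b/(2*π)| = b/(2*π) := abs_of_nonneg (by positivity)
      have h3 : |(-2*s*t/(s^2+t^2)^2)| * |φ ![s, t]| ≤ (1/ε^2) * C0 :=
        mul_le_mul (kernel_bound hε ht) (by simpa [Real.norm_eq_abs] using hC0 ![s, t])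
          (abs_nonneg _) (by positivity)
      calc |b/(2*π)| * |(-2*s*t/(s^2+t^2)^2)| * |φ ![s, t]|
          = (b/(2*π)) * (|(-2*s*t/(s^2+t^2)^2)| * |φ ![s, t]|) := by rw [k1]; ring
        _ ≤ (b/(2*π)) * ((1/ε^2) * C0) := mul_le_mul_of_nonneg_left h3 (by positivity)
        _ = (b/(2*π)) * (1/ε^2) * C0 := by ring
    calc |Wf b φ s t| ≤ |Zf b s t * pd 1 (pd 1 φ) ![s, t]|
        + |((b/(2*π)) * (-2*s*t/(s^2+t^2)^2)) * φ ![s, t]| := abs_sub _ _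
      _ ≤ C := by rw [hC]; exact add_le_add e1 e2
  have hint : MeasureTheory.Integrable (Function.uncurry f)
      (MeasureTheory.volume : MeasureTheory.Measure (ℝ × ℝ)) := by
    have hmeas : Measurable (Function.uncurry f) := by
      have h1 : Function.uncurry f = fun q : ℝ × ℝ =>
          (T ×ˢ (Set.univ : Set ℝ)).indicator (fun q : ℝ × ℝ => Wf b φ q.2 q.1) q := by
        funext q
        by_cases h : q.1 ∈ T
        · simp [Function.uncurry, hf, Set.indicator_of_mem, h, Set.mem_prod]
        · simp [Function.uncurry, hf, Set.indicator_of_notMem, h, Set.mem_prod]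
      rw [h1]
      exact ((measurable_Wf b hφ).comp measurable_swap).indicator (hT.prod MeasurableSet.univ)
    apply MeasureTheory.Integrable.mono'
      (g := (Set.Icc (-M') M' ×ˢ Set.Icc (-M') M').indicator (fun _ => C))
    · apply MeasureTheory.IntegrableOn.integrable_indicator
      · rw [MeasureTheory.integrableOn_const_iff]
        exact Or.inr ((isCompact_Icc.prod isCompact_Icc).measure_lt_top)
      · exact (measurableSet_Icc.prod measurableSet_Icc)
    · exact hmeas.aestronglyMeasurable
    · apply MeasureTheory.ae_of_all
      rintro ⟨t, s⟩
      have hMM' : M < M' := by simp [hM'def]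
      by_cases hq : (t, s) ∈ (Set.Icc (-M') M' ×ˢ Set.Icc (-M') M')
      · rw [Set.indicator_of_mem hq]
        by_cases h : t ∈ T
        · simpa [Function.uncurry, hf, Set.indicator_of_mem h, Real.norm_eq_abs] using
            hWbound s t (hTsub t h)
        · simp [Function.uncurry, hf, Set.indicator_of_notMem h, hCpos]
      · rw [Set.indicator_of_notMem hq]
        have hz : Wf b φ s t = 0 := by
          rw [Set.mem_prod, not_and_or] at hq
          apply Wf_zero_of_big b hM
          rcases hq with h | h
          · right
            rw [Set.mem_Icc, not_and_or] at h
            rcases h with h | h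
            · rw [lt_abs]; right; linarith
            · rw [lt_abs]; left; linarith
          · left
            rw [Set.mem_Icc, not_and_or] at h
            rcases h with h | h
            · rw [lt_abs]; right; linarith
            · rw [lt_abs]; left; linarith
        by_cases h : t ∈ T
        · simp [Function.uncurry, hf, Set.indicator_of_mem h, hz]
        · simp [Function.uncurry, hf, Set.indicator_of_notMem h]
  have hswap := MeasureTheory.integral_integral_swap (f := f) (by
    rw [← MeasureTheory.Measure.volume_eq_prod]
    exact hint)
  have lhs_eq : ∫ t in T, (∫ s : ℝ, Wf b φ s t) = ∫ t : ℝ, ∫ s : ℝ, f t s := by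
    rw [← MeasureTheory.integral_indicator hT]
    congr 1
    funext t
    by_cases h : t ∈ T
    · simp only [Set.indicator_of_mem h, hf]
    · simp only [Set.indicator_of_notMem h, hf]
      rw [MeasureTheory.integral_congr_ae (g := fun _ => (0:ℝ))
        (MeasureTheory.ae_of_all _ (fun s => by simp [Set.indicator_of_notMem h]))]
      simp
  have rhs_eq : ∫ s : ℝ, (∫ t in T, Wf b φ s t) = ∫ s : ℝ, ∫ t : ℝ, f t s := by
    congr 1
    funext s
    rw [← MeasureTheory.integral_indicator hT]
  rw [lhs_eq, rhs_eq, hswap]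

end Swap

section ClaimA

variable {φ : (Fin 2 → ℝ) → ℝ} {M : ℝ}

lemma integrable_bdry1 (b : ℝ) (hφ : ContDiff ℝ (⊤:ℕ∞) φ)
    (hM : tsupport φ ⊆ Metric.closedBall 0 M) {t0 : ℝ} (ht0 : t0 ≠ 0) :
    MeasureTheory.Integrable (fun s : ℝ => Zf b s t0 * pd 1 φ ![s, t0]) := by
  apply Continuous.integrable_of_hasCompactSupport
  · exact (continuous_Zf_s ht0).mul (continuous_line_s (contDiff_pd 1 φ hφ).continuous t0)
  · apply hasCompactSupport_of_vanish (M := M)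
    intro s hs
    have hn := nmem_tsupport_of_big hM (s := s) (t := t0) (Or.inl hs)
    rw [pd_eq_zero_of_nmem 1 hn, mul_zero]

lemma integrable_bdry2 (b : ℝ) (hφ : ContDiff ℝ (⊤:ℕ∞) φ)
    (hM : tsupport φ ⊆ Metric.closedBall 0 M) {ε : ℝ} (t0 : ℝ) (hε : 0 < ε) :
    MeasureTheory.Integrable (fun s : ℝ => (b/(2*π)) * (s/(s^2+ε^2)) * φ ![s, t0]) := by
  have hden : ∀ s : ℝ, s^2 + ε^2 ≠ 0 := by
    intro s
    have := pow_two_pos_of_ne_zero (ne_of_gt hε)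
    nlinarith [sq_nonneg s]
  apply Continuous.integrable_of_hasCompactSupport
  · refine Continuous.mul ?_ (continuous_line_s hφ.continuous t0)
    exact continuous_const.mul (Continuous.div continuous_id
      ((continuous_pow 2).add continuous_const) hden)
  · apply hasCompactSupport_of_vanish (M := M)
    intro s hs
    have hn := nmem_tsupport_of_big hM (s := s) (t := t0) (Or.inl hs)
    rw [image_eq_zero_of_notMem_tsupport hn, mul_zero]

lemma claimA (b : ℝ) (hb : 0 < b) (hφ : ContDiff ℝ (⊤:ℕ∞) φ) (hφc : HasCompactSupport φ)
    (hM : tsupport φ ⊆ Metric.closedBall 0 M) (hM0 : 0 < M)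
    {ε : ℝ} (hε : 0 < ε) (hεM : ε ≤ M) :
    (∫ t in Set.Ioi ε, ∫ s : ℝ, Zf b s t * (pd 0 (pd 0 φ) ![s, t] + pd 1 (pd 1 φ) ![s, t]))
    + (∫ t in Set.Iic (-ε), ∫ s : ℝ, Zf b s t * (pd 0 (pd 0 φ) ![s, t] + pd 1 (pd 1 φ) ![s, t]))
    = ∫ s : ℝ, ((b/4 + (b/(2*π)) * Real.arctan (s/ε)) * (pd 1 φ ![s, ε] + pd 1 φ ![s, -ε])
        + (b/(2*π)) * (s/(s^2+ε^2)) * (φ ![s, ε] - φ ![s, -ε])) := by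
  have hu1 : ∫ t in Set.Ioi ε, (∫ s : ℝ, Zf b s t * (pd 0 (pd 0 φ) ![s, t] + pd 1 (pd 1 φ) ![s, t]))
      = ∫ t in Set.Ioi ε, (∫ s : ℝ, Wf b φ s t) := by
    apply MeasureTheory.setIntegral_congr_fun measurableSet_Ioi
    intro t ht
    exact lineF b hφ hφc hM hM0 (ne_of_gt (lt_trans hε ht))
  have hl1 : ∫ t in Set.Iic (-ε), (∫ s : ℝ, Zf b s t * (pd 0 (pd 0 φ) ![s, t] + pd 1 (pd 1 φ) ![s, t]))
      = ∫ t in Set.Iic (-ε), (∫ s : ℝ, Wf b φ s t) := by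
    apply MeasureTheory.setIntegral_congr_fun measurableSet_Iic
    intro t ht
    rw [Set.mem_Iic] at ht
    exact lineF b hφ hφc hM hM0 (by intro h; rw [h] at ht; linarith)
  have hu2 := swap_W b hb hφ hφc hM hM0 hε (measurableSet_Ioi (a := ε))
    (fun t ht => le_trans (le_of_lt ht) (le_abs_self t))
  have hl2 := swap_W b hb hφ hφc hM hM0 hε (measurableSet_Iic (a := -ε))
    (fun t ht => by
      rw [Set.mem_Iic] at ht
      rw [abs_of_nonpos (by linarith)]
      linarith)
  have hu3 : ∫ s : ℝ, (∫ t in Set.Ioi ε, Wf b φ s t)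
      = ∫ s : ℝ, (-(Zf b s ε * pd 1 φ ![s, ε]) + (b/(2*π)) * (s/(s^2+ε^2)) * φ ![s, ε]) := by
    congr 1
    funext s
    exact t_line_upper b hφ hM hM0 hε hεM s
  have hl3 : ∫ s : ℝ, (∫ t in Set.Iic (-ε), Wf b φ s t)
      = ∫ s : ℝ, (Zf b s (-ε) * pd 1 φ ![s, -ε] - (b/(2*π)) * (s/(s^2+ε^2)) * φ ![s, -ε]) := by
    congr 1
    funext s
    exact t_line_lower b hφ hM hM0 hε hεM s
  rw [hu1, hl1, hu2, hl2, hu3, hl3]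
  have hiu : MeasureTheory.Integrable (fun s : ℝ =>
      -(Zf b s ε * pd 1 φ ![s, ε]) + (b/(2*π)) * (s/(s^2+ε^2)) * φ ![s, ε]) :=
    (integrable_bdry1 b hφ hM (ne_of_gt hε)).neg.add (integrable_bdry2 b hφ hM ε hε)
  have hil : MeasureTheory.Integrable (fun s : ℝ =>
      Zf b s (-ε) * pd 1 φ ![s, -ε] - (b/(2*π)) * (s/(s^2+ε^2)) * φ ![s, -ε]) :=
    (integrable_bdry1 b hφ hM (t0 := -ε) (by intro h; rw [neg_eq_zero] at h; exact (ne_of_gt hε) h)).sub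
      (integrable_bdry2 b hφ hM (-ε) hε)
  rw [← MeasureTheory.integral_add hiu hil]
  congr 1
  funext s
  have h1 : Zf b s ε = -(b/4) - (b / (2 * π)) * Real.arctan (s / ε) := Zf_of_pos b s ε hε
  have h2 : Zf b s (-ε) = b/4 + (b / (2 * π)) * Real.arctan (s / ε) := by
    rw [Zf_of_neg b s (-ε) (by linarith), div_neg, Real.arctan_neg]
    ring
  rw [h1, h2]
  ring

end ClaimA

section Limit

open Filter Topology

variable {φ : (Fin 2 → ℝ) → ℝ} {M : ℝ}

lemma phi_diff_bound (hφ : ContDiff ℝ (⊤:ℕ∞) φ) {C2 : ℝ}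
    (hC2 : ∀ x, ‖pd 1 φ x‖ ≤ C2) (s ε : ℝ) :
    |φ ![s, ε] - φ ![s, -ε]| ≤ C2 * (2 * |ε|) := by
  have hdφ : Differentiable ℝ φ := hφ.differentiable (by simp)
  have key := Convex.norm_image_sub_le_of_norm_deriv_le (𝕜 := ℝ)
    (f := fun t : ℝ => φ ![s, t]) (s := Set.univ) (x := -ε) (y := ε) (C := C2)
    (fun x _ => (hasDerivAt_line_t φ hdφ s x).differentiableAt)
    (fun x _ => by
      rw [(hasDerivAt_line_t φ hdφ s x).deriv]
      exact hC2 ![s, x])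
    convex_univ (Set.mem_univ _) (Set.mem_univ _)
  have : ‖ε - -ε‖ = 2 * |ε| := by
    rw [Real.norm_eq_abs]
    rw [show ε - -ε = 2 * ε by ring, abs_mul]
    norm_num
  rw [Real.norm_eq_abs] at key
  calc |φ ![s, ε] - φ ![s, -ε]| ≤ C2 * ‖ε - -ε‖ := key
    _ = C2 * (2 * |ε|) := by rw [this]

lemma amgm_bound {s ε : ℝ} (hε : 0 < ε) : |s/(s^2+ε^2)| * (2 * ε) ≤ 1 := by
  have hd : (0:ℝ) < s^2 + ε^2 := by positivity
  rw [abs_div, abs_of_pos hd, div_mul_eq_mul_div, div_le_one hd]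
  nlinarith [sq_nonneg (|s| - ε), sq_abs s]

lemma limit_bdry (b : ℝ) (hb : 0 < b) (hφ : ContDiff ℝ (⊤:ℕ∞) φ)
    (hφc : HasCompactSupport φ)
    (hM : tsupport φ ⊆ Metric.closedBall 0 M) (hM0 : 0 < M) :
    Tendsto (fun n : ℕ => ∫ s : ℝ,
      ((b/4 + (b/(2*π)) * Real.arctan (s/((1:ℝ)/(n+1)))) *
          (pd 1 φ ![s, (1:ℝ)/(n+1)] + pd 1 φ ![s, -((1:ℝ)/(n+1))])
        + (b/(2*π)) * (s/(s^2+((1:ℝ)/(n+1))^2)) * (φ ![s, (1:ℝ)/(n+1)] - φ ![s, -((1:ℝ)/(n+1))])))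
      atTop (𝓝 (b * ∫ s in Set.Ioi (0:ℝ), pd 1 φ ![s, 0])) := by
  have hπ : (0:ℝ) < π := Real.pi_pos
  have hcp : Continuous (pd 1 φ) := (contDiff_pd 1 φ hφ).continuous
  obtain ⟨C2, hC2⟩ := Continuous.bounded_above_of_compact_support hcp
    (hasCompactSupport_pd 1 φ hφc)
  have hC2' : 0 ≤ C2 := le_trans (norm_nonneg _) (hC2 0)
  have hεpos : ∀ n : ℕ, (0:ℝ) < 1/(n+1) := by
    intro n
    positivity
  set F : ℕ → ℝ → ℝ := fun n s =>
      ((b/4 + (b/(2*π)) * Real.arctan (s/((1:ℝ)/(n+1)))) *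
          (pd 1 φ ![s, (1:ℝ)/(n+1)] + pd 1 φ ![s, -((1:ℝ)/(n+1))])
        + (b/(2*π)) * (s/(s^2+((1:ℝ)/(n+1))^2)) * (φ ![s, (1:ℝ)/(n+1)] - φ ![s, -((1:ℝ)/(n+1))]))
    with hF
  set f : ℝ → ℝ := Set.indicator (Set.Ioi (0:ℝ)) (fun s => b * pd 1 φ ![s, 0]) with hfdef
  have key : Tendsto (fun n => ∫ s : ℝ, F n s) atTop (𝓝 (∫ s : ℝ, f s)) := by
    apply MeasureTheory.tendsto_integral_of_dominated_convergence
      (bound := Set.indicator (Set.Icc (-M) M) (fun _ => b * C2 + (b/(2*π)) * C2))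
    · -- measurability
      intro n
      apply Continuous.aestronglyMeasurable
      apply Continuous.add
      · apply Continuous.mul
        · exact continuous_const.add (continuous_const.mul
            (Real.continuous_arctan.comp (continuous_id.div_const _)))
        · exact (continuous_line_s hcp _).add (continuous_line_s hcp _)
      · apply Continuous.mul
        · refine continuous_const.mul (Continuous.div continuous_id
            ((continuous_pow 2).add continuous_const) (fun s => ?_))
          have := hεpos n
          positivity
        · exact (continuous_line_s hφ.continuous _).sub (continuous_line_s hφ.continuous _)
    · -- integrable bound
      apply MeasureTheory.IntegrableOn.integrable_indicator _ measurableSet_Icc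
      rw [MeasureTheory.integrableOn_const_iff]
      exact Or.inr measure_Icc_lt_top
    · -- bound
      intro n
      apply MeasureTheory.ae_of_all
      intro s
      by_cases hs : s ∈ Set.Icc (-M) M
      · rw [Set.indicator_of_mem hs]
        have e1 : |b/4 + (b/(2*π)) * Real.arctan (s/((1:ℝ)/(n+1)))| ≤ b/2 := by
          have h1 : |Real.arctan (s/((1:ℝ)/(n+1)))| ≤ π/2 := by
            rw [abs_le]
            constructor
            · linarith [Real.neg_pi_div_two_lt_arctan (s/((1:ℝ)/(n+1)))]
            · linarith [Real.arctan_lt_pi_div_two (s/((1:ℝ)/(n+1)))]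
          have h2 : |(b/(2*π)) * Real.arctan (s/((1:ℝ)/(n+1)))| ≤ b/4 := by
            rw [abs_mul, abs_of_nonneg (by positivity : (0:ℝ) ≤ b/(2*π))]
            calc (b/(2*π)) * |Real.arctan (s/((1:ℝ)/(n+1)))| ≤ (b/(2*π)) * (π/2) :=
                mul_le_mul_of_nonneg_left h1 (by positivity)
              _ = b/4 := by field_simp; ring
          calc |b/4 + (b/(2*π)) * Real.arctan (s/((1:ℝ)/(n+1)))|
              ≤ |b/4| + |(b/(2*π)) * Real.arctan (s/((1:ℝ)/(n+1)))| := abs_add_le _ _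
            _ ≤ b/4 + b/4 := add_le_add (le_of_eq (abs_of_nonneg (by positivity))) h2
            _ = b/2 := by ring
        have e2 : |pd 1 φ ![s, (1:ℝ)/(n+1)] + pd 1 φ ![s, -((1:ℝ)/(n+1))]| ≤ 2 * C2 := by
          calc |pd 1 φ ![s, (1:ℝ)/(n+1)] + pd 1 φ ![s, -((1:ℝ)/(n+1))]|
              ≤ |pd 1 φ ![s, (1:ℝ)/(n+1)]| + |pd 1 φ ![s, -((1:ℝ)/(n+1))]| := abs_add_le _ _
            _ ≤ C2 + C2 := add_le_add (by simpa [Real.norm_eq_abs] using hC2 _)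
                (by simpa [Real.norm_eq_abs] using hC2 _)
            _ = 2 * C2 := by ring
        have e3 : |(b/(2*π)) * (s/(s^2+((1:ℝ)/(n+1))^2)) *
            (φ ![s, (1:ℝ)/(n+1)] - φ ![s, -((1:ℝ)/(n+1))])| ≤ (b/(2*π)) * C2 := by
          rw [abs_mul, abs_mul, abs_of_nonneg (by positivity : (0:ℝ) ≤ b/(2*π))]
          have h4 := phi_diff_bound hφ hC2 s ((1:ℝ)/(n+1))
          rw [abs_of_pos (hεpos n)] at h4
          have h5 : |s/(s^2+((1:ℝ)/(n+1))^2)| * |φ ![s, (1:ℝ)/(n+1)] - φ ![s, -((1:ℝ)/(n+1))]|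
              ≤ C2 := by
            calc |s/(s^2+((1:ℝ)/(n+1))^2)| * |φ ![s, (1:ℝ)/(n+1)] - φ ![s, -((1:ℝ)/(n+1))]|
                ≤ |s/(s^2+((1:ℝ)/(n+1))^2)| * (C2 * (2 * ((1:ℝ)/(n+1)))) :=
                  mul_le_mul_of_nonneg_left h4 (abs_nonneg _)
              _ = (|s/(s^2+((1:ℝ)/(n+1))^2)| * (2 * ((1:ℝ)/(n+1)))) * C2 := by ring
              _ ≤ 1 * C2 := mul_le_mul_of_nonneg_right (amgm_bound (hεpos n)) hC2'
              _ = C2 := one_mul C2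
          rw [mul_assoc]
          exact mul_le_mul_of_nonneg_left h5 (by positivity)
        rw [Real.norm_eq_abs, hF]
        calc |F n s| ≤ |(b/4 + (b/(2*π)) * Real.arctan (s/((1:ℝ)/(n+1)))) *
              (pd 1 φ ![s, (1:ℝ)/(n+1)] + pd 1 φ ![s, -((1:ℝ)/(n+1))])|
            + |(b/(2*π)) * (s/(s^2+((1:ℝ)/(n+1))^2)) *
              (φ ![s, (1:ℝ)/(n+1)] - φ ![s, -((1:ℝ)/(n+1))])| := abs_add_le _ _
          _ ≤ (b/2) * (2*C2) + (b/(2*π)) * C2 := by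
              apply add_le_add ?_ e3
              rw [abs_mul]
              exact mul_le_mul e1 e2 (abs_nonneg _) (by positivity)
          _ = b * C2 + (b/(2*π)) * C2 := by ring
      · rw [Set.indicator_of_notMem hs]
        have hsbig : M < |s| := by
          rw [Set.mem_Icc, not_and_or] at hs
          rcases hs with h | h
          · rw [lt_abs]; right; linarith [not_le.mp h]
          · rw [lt_abs]; left; linarith [not_le.mp h]
        have hzero : ∀ t : ℝ, φ ![s, t] = 0 ∧ pd 1 φ ![s, t] = 0 := by
          intro t
          have hn := nmem_tsupport_of_big hM (s := s) (t := t) (Or.inl hsbig)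
          exact ⟨image_eq_zero_of_notMem_tsupport hn, pd_eq_zero_of_nmem 1 hn⟩
        have hz : F n s = 0 := by
          simp only [hF]
          rw [(hzero ((1:ℝ)/(n+1))).1, (hzero (-((1:ℝ)/(n+1)))).1,
            (hzero ((1:ℝ)/(n+1))).2, (hzero (-((1:ℝ)/(n+1)))).2]
          ring
        simp [hz]
    · -- pointwise convergence
      have hsne : ({(0:ℝ)} : Set ℝ)ᶜ ∈ MeasureTheory.ae MeasureTheory.volume :=
        MeasureTheory.compl_mem_ae_iff.mpr Real.volume_singleton
      filter_upwards [hsne] with s hs'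
      have hs : s ≠ 0 := by simpa using hs'
      have htends_eps : Tendsto (fun n : ℕ => (1:ℝ)/(n+1)) atTop (𝓝 0) :=
        tendsto_one_div_add_atTop_nhds_zero_nat
      have htends_p : Tendsto (fun n : ℕ => pd 1 φ ![s, (1:ℝ)/(n+1)]) atTop
          (𝓝 (pd 1 φ ![s, 0])) :=
        ((continuous_line_t hcp s).tendsto 0).comp htends_eps
      have htends_m : Tendsto (fun n : ℕ => pd 1 φ ![s, -((1:ℝ)/(n+1))]) atTop
          (𝓝 (pd 1 φ ![s, 0])) := by
        have : Tendsto (fun n : ℕ => -((1:ℝ)/(n+1))) atTop (𝓝 0) := by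
          simpa using htends_eps.neg
        exact ((continuous_line_t hcp s).tendsto 0).comp (by simpa using this)
      have htends_phi : Tendsto (fun n : ℕ =>
          φ ![s, (1:ℝ)/(n+1)] - φ ![s, -((1:ℝ)/(n+1))]) atTop (𝓝 0) := by
        have h1 : Tendsto (fun n : ℕ => φ ![s, (1:ℝ)/(n+1)]) atTop (𝓝 (φ ![s, 0])) :=
          ((continuous_line_t hφ.continuous s).tendsto 0).comp htends_eps
        have h2 : Tendsto (fun n : ℕ => φ ![s, -((1:ℝ)/(n+1))]) atTop (𝓝 (φ ![s, 0])) := by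
          have : Tendsto (fun n : ℕ => -((1:ℝ)/(n+1))) atTop (𝓝 0) := by
            simpa using htends_eps.neg
          exact ((continuous_line_t hφ.continuous s).tendsto 0).comp (by simpa using this)
        simpa using h1.sub h2
      have htends_k : Tendsto (fun n : ℕ => s/(s^2+((1:ℝ)/(n+1))^2)) atTop (𝓝 (s/s^2)) := by
        have hd : Tendsto (fun n : ℕ => s^2+((1:ℝ)/(n+1))^2) atTop (𝓝 (s^2)) := by
          have := (htends_eps.pow 2)
          simpa using (tendsto_const_nhds (x := s^2)).add this
        exact tendsto_const_nhds.div hd (pow_ne_zero 2 hs)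
      rcases hs.lt_or_gt with hneg | hpos
      · -- s < 0
        have harctan : Tendsto (fun n : ℕ => Real.arctan (s/((1:ℝ)/(n+1)))) atTop
            (𝓝 (-(π/2))) := by
          have hbot : Tendsto (fun n : ℕ => s/((1:ℝ)/(n+1))) atTop atBot := by
            have heq : (fun n : ℕ => s/((1:ℝ)/(n+1))) = fun n : ℕ => s * ((n:ℝ)+1) := by
              funext n
              rw [div_div_eq_mul_div, div_one]
            rw [heq]
            exact Tendsto.const_mul_atTop_of_neg hneg
              (tendsto_atTop_add_const_right atTop 1 tendsto_natCast_atTop_atTop)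
          exact (Real.tendsto_arctan_atBot.mono_right nhdsWithin_le_nhds).comp hbot
        have hlim : Tendsto (fun n => F n s) atTop (𝓝 ((b/4 + (b/(2*π)) * (-(π/2))) *
            (pd 1 φ ![s, 0] + pd 1 φ ![s, 0]) + (b/(2*π)) * (s/s^2) * 0)) := by
          apply Tendsto.add
          · exact ((tendsto_const_nhds.add (tendsto_const_nhds.mul harctan)).mul
              (htends_p.add htends_m))
          · exact (tendsto_const_nhds.mul htends_k).mul htends_phi
        have : f s = (b/4 + (b/(2*π)) * (-(π/2))) * (pd 1 φ ![s, 0] + pd 1 φ ![s, 0])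
            + (b/(2*π)) * (s/s^2) * 0 := by
          rw [hfdef, Set.indicator_of_notMem (by simp [Set.mem_Ioi]; linarith)]
          have : b/4 + (b/(2*π)) * (-(π/2)) = 0 := by field_simp; ring
          rw [this]
          ring
        rw [this]
        exact hlim
      · -- s > 0
        have harctan : Tendsto (fun n : ℕ => Real.arctan (s/((1:ℝ)/(n+1)))) atTop
            (𝓝 (π/2)) := by
          have htop : Tendsto (fun n : ℕ => s/((1:ℝ)/(n+1))) atTop atTop := by
            have heq : (fun n : ℕ => s/((1:ℝ)/(n+1))) = fun n : ℕ => s * ((n:ℝ)+1) := by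
              funext n
              rw [div_div_eq_mul_div, div_one]
            rw [heq]
            exact Tendsto.const_mul_atTop hpos
              (tendsto_atTop_add_const_right atTop 1 tendsto_natCast_atTop_atTop)
          exact (Real.tendsto_arctan_atTop.mono_right nhdsWithin_le_nhds).comp htop
        have hlim : Tendsto (fun n => F n s) atTop (𝓝 ((b/4 + (b/(2*π)) * (π/2)) *
            (pd 1 φ ![s, 0] + pd 1 φ ![s, 0]) + (b/(2*π)) * (s/s^2) * 0)) := by
          apply Tendsto.add
          · exact ((tendsto_const_nhds.add (tendsto_const_nhds.mul harctan)).mul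
              (htends_p.add htends_m))
          · exact (tendsto_const_nhds.mul htends_k).mul htends_phi
        have : f s = (b/4 + (b/(2*π)) * (π/2)) * (pd 1 φ ![s, 0] + pd 1 φ ![s, 0])
            + (b/(2*π)) * (s/s^2) * 0 := by
          rw [hfdef, Set.indicator_of_mem (by simp [Set.mem_Ioi]; linarith)]
          have : b/4 + (b/(2*π)) * (π/2) = b/2 := by field_simp; ring
          rw [this]
          ring
        rw [this]
        exact hlim
  have hfint : ∫ s : ℝ, f s = b * ∫ s in Set.Ioi (0:ℝ), pd 1 φ ![s, 0] := by
    rw [hfdef, MeasureTheory.integral_indicator measurableSet_Ioi]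
    exact MeasureTheory.integral_const_mul b _
  rw [hfint] at key
  exact key

end Limit

section Main

open Filter Topology

lemma vec_eq_symm (p : ℝ × ℝ) : ![p.1, p.2] = MeasurableEquiv.finTwoArrow.symm p := by
  funext i
  fin_cases i <;> rfl

/-- The function `z₃(x₁,x₂) = −(|b|/4) sign(x₂) − (|b|/2π) arctan(x₁/x₂)` satisfies the
distributional equation `Δ z₃ = −|b| H(x₁) δ′(x₂)`: for all test functions `φ`,
`∫ z₃ Δφ = |b| ∫₀^∞ ∂₂φ(x₁,0) dx₁`. -/
theorem z3_distributional_laplacian (b : ℝ) (hb : 0 < b)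
    (z₃ : (Fin 2 → ℝ) → ℝ)
    (hz : ∀ x, z₃ x = -(b / 4) * (if 0 < x 1 then 1 else -1)
        - (b / (2 * π)) * (if x 1 = 0 then 0 else arctan (x 0 / x 1))) :
    ∀ φ : (Fin 2 → ℝ) → ℝ, ContDiff ℝ (⊤ : ℕ∞) φ → HasCompactSupport φ →
      (∫ x : Fin 2 → ℝ, z₃ x * (∑ j, pd j (fun y => pd j φ y) x)) =
      b * ∫ x₁ in Set.Ioi (0:ℝ), pd 1 φ ![x₁, 0] := by
  intro φ hφ₀ hφc
  have hφ : ContDiff ℝ (⊤:ℕ∞) φ := hφ₀.of_le (by simp)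
  obtain ⟨M₀, hM₀⟩ := hφc.isBounded.subset_closedBall 0
  set M : ℝ := max M₀ 1 with hMdef
  have hM : tsupport φ ⊆ Metric.closedBall 0 M :=
    subset_trans hM₀ (Metric.closedBall_subset_closedBall (le_max_left _ _))
  have hM1 : (1:ℝ) ≤ M := le_max_right _ _
  have hM0 : 0 < M := lt_of_lt_of_le one_pos hM1
  have hπ : (0:ℝ) < π := Real.pi_pos
  set M' : ℝ := M + 1 with hM'def
  have hcd : Continuous (fun x : Fin 2 → ℝ => pd 0 (pd 0 φ) x + pd 1 (pd 1 φ) x) :=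
    ((contDiff_pd 0 (pd 0 φ) (contDiff_pd 0 φ hφ)).continuous).add
      ((contDiff_pd 1 (pd 1 φ) (contDiff_pd 1 φ hφ)).continuous)
  have hcds : HasCompactSupport (fun x : Fin 2 → ℝ => pd 0 (pd 0 φ) x + pd 1 (pd 1 φ) x) := by
    apply HasCompactSupport.of_support_subset_isCompact hφc
    intro x hx
    by_contra hc
    apply hx
    simp only [Function.mem_support, ne_eq, not_not]
    rw [pd_pd_eq_zero_of_nmem 0 hc, pd_pd_eq_zero_of_nmem 1 hc, add_zero]
  obtain ⟨CD, hCD⟩ := Continuous.bounded_above_of_compact_support hcd hcds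
  have hCD0 : 0 ≤ CD := le_trans (norm_nonneg _) (hCD 0)
  -- integrand on ℝ × ℝ
  set G : ℝ × ℝ → ℝ := fun p => Zf b p.1 p.2 *
    (pd 0 (pd 0 φ) ![p.1, p.2] + pd 1 (pd 1 φ) ![p.1, p.2]) with hGdef
  have hDcont : Continuous (fun p : ℝ × ℝ =>
      pd 0 (pd 0 φ) ![p.1, p.2] + pd 1 (pd 1 φ) ![p.1, p.2]) := hcd.comp continuous_embed
  have hDsupp : HasCompactSupport (fun p : ℝ × ℝ =>
      pd 0 (pd 0 φ) ![p.1, p.2] + pd 1 (pd 1 φ) ![p.1, p.2]) := by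
    apply HasCompactSupport.intro ((isCompact_Icc (a := (-M':ℝ)) (b := (M':ℝ))).prod
      (isCompact_Icc (a := (-M':ℝ)) (b := (M':ℝ))))
    rintro ⟨s, t⟩ hp
    have hbig : M < |s| ∨ M < |t| := by
      rw [Set.mem_prod, not_and_or] at hp
      rcases hp with h | h
      · left
        rw [Set.mem_Icc, not_and_or] at h
        rcases h with h | h
        · rw [lt_abs]; right; push_neg at h; simp only [hM'def] at h; linarith
        · rw [lt_abs]; left; push_neg at h; simp only [hM'def] at h; linarith
      · right
        rw [Set.mem_Icc, not_and_or] at h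
        rcases h with h | h
        · rw [lt_abs]; right; push_neg at h; simp only [hM'def] at h; linarith
        · rw [lt_abs]; left; push_neg at h; simp only [hM'def] at h; linarith
    have hn := nmem_tsupport_of_big hM hbig
    simp only
    rw [pd_pd_eq_zero_of_nmem 0 hn, pd_pd_eq_zero_of_nmem 1 hn, add_zero]
  have hGint : MeasureTheory.Integrable G := by
    apply MeasureTheory.Integrable.bdd_mul
      (hDcont.integrable_of_hasCompactSupport hDsupp)
      (measurable_Zf b).aestronglyMeasurable
    exact MeasureTheory.ae_of_all _ (fun p => by simpa [Real.norm_eq_abs] using Zf_abs_le b p.1 p.2 hb)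
  -- LHS equals iterated integral
  set F : ℝ → ℝ := fun t => ∫ s : ℝ,
    Zf b s t * (pd 0 (pd 0 φ) ![s, t] + pd 1 (pd 1 φ) ![s, t]) with hFdef
  have hLHS : (∫ x : Fin 2 → ℝ, z₃ x * (∑ j, pd j (fun y => pd j φ y) x)) = ∫ t : ℝ, F t := by
    have h1 : (∫ x : Fin 2 → ℝ, z₃ x * (∑ j, pd j (fun y => pd j φ y) x)) =
        ∫ p : ℝ × ℝ, z₃ (MeasurableEquiv.finTwoArrow.symm p) *
          (∑ j, pd j (fun y => pd j φ y) (MeasurableEquiv.finTwoArrow.symm p)) :=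
      (((MeasureTheory.volume_preserving_finTwoArrow ℝ).symm _).integral_comp
        (MeasurableEquiv.finTwoArrow.symm).measurableEmbedding
        (fun x : Fin 2 → ℝ => z₃ x * (∑ j, pd j (fun y => pd j φ y) x))).symm
    have h2 : ∀ p : ℝ × ℝ, z₃ (MeasurableEquiv.finTwoArrow.symm p) *
        (∑ j, pd j (fun y => pd j φ y) (MeasurableEquiv.finTwoArrow.symm p)) = G p := by
      intro p
      rw [← vec_eq_symm, hGdef]
      have hx0 : (![p.1, p.2] : Fin 2 → ℝ) 0 = p.1 := rfl
      have hx1 : (![p.1, p.2] : Fin 2 → ℝ) 1 = p.2 := rfl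
      rw [hz ![p.1, p.2], Fin.sum_univ_two, hx0, hx1]
      rfl
    rw [h1, MeasureTheory.integral_congr_ae (MeasureTheory.ae_of_all _ h2)]
    have hGint' := hGint
    rw [MeasureTheory.Measure.volume_eq_prod] at hGint'
    rw [MeasureTheory.Measure.volume_eq_prod]
    exact MeasureTheory.integral_prod_symm G hGint'
  have hFint : MeasureTheory.Integrable F := by
    have hGint' := hGint
    rw [MeasureTheory.Measure.volume_eq_prod] at hGint'
    exact MeasureTheory.Integrable.integral_prod_right (f := G) hGint'
  -- uniform bound for F
  have hFbound : ∀ t : ℝ, ‖F t‖ ≤ (b/2) * CD * (2*M') := by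
    intro t
    have hzero : ∀ s : ℝ, s ∉ Set.Ioc (-M') M' →
        Zf b s t * (pd 0 (pd 0 φ) ![s, t] + pd 1 (pd 1 φ) ![s, t]) = 0 := by
      intro s hs
      have hbig : M < |s| := by
        rw [Set.mem_Ioc, not_and_or] at hs
        rcases hs with h | h
        · rw [lt_abs]; right; push_neg at h; simp only [hM'def] at h; linarith
        · rw [lt_abs]; left; push_neg at h; simp only [hM'def] at h; linarith
      have hn := nmem_tsupport_of_big hM (s := s) (t := t) (Or.inl hbig)
      rw [pd_pd_eq_zero_of_nmem 0 hn, pd_pd_eq_zero_of_nmem 1 hn, add_zero, mul_zero]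
    have hmeas0 : Measurable (fun s : ℝ =>
        Zf b s t * (pd 0 (pd 0 φ) ![s, t] + pd 1 (pd 1 φ) ![s, t])) := by
      apply Measurable.mul
      · exact (measurable_Zf b).comp (measurable_id.prodMk measurable_const)
      · exact (hcd.comp (continuous_embed.comp
          (continuous_id.prodMk continuous_const))).measurable
    have hptbd : ∀ s ∈ Set.Ioc (-M') M',
        ‖Zf b s t * (pd 0 (pd 0 φ) ![s, t] + pd 1 (pd 1 φ) ![s, t])‖ ≤ (b/2) * CD := by
      intro s _
      rw [Real.norm_eq_abs, abs_mul]
      apply mul_le_mul (Zf_abs_le b s t hb) ?_ (abs_nonneg _) (by linarith)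
      simpa [Real.norm_eq_abs] using hCD ![s, t]
    have hkey : F t = ∫ s in Set.Ioc (-M') M',
        Zf b s t * (pd 0 (pd 0 φ) ![s, t] + pd 1 (pd 1 φ) ![s, t]) := by
      rw [hFdef]
      exact (MeasureTheory.setIntegral_eq_integral_of_forall_compl_eq_zero hzero).symm
    rw [hkey]
    have hμ : MeasureTheory.volume (Set.Ioc (-M') M') < ⊤ := by
      rw [Real.volume_Ioc]; exact ENNReal.ofReal_lt_top
    calc ‖∫ s in Set.Ioc (-M') M',
          Zf b s t * (pd 0 (pd 0 φ) ![s, t] + pd 1 (pd 1 φ) ![s, t])‖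
        ≤ ((b/2) * CD) * (MeasureTheory.volume (Set.Ioc (-M') M')).toReal :=
          MeasureTheory.norm_setIntegral_le_of_norm_le_const hμ hptbd
      _ = (b/2) * CD * (2*M') := by
          rw [Real.volume_Ioc, ENNReal.toReal_ofReal (by
            simp only [hM'def]; linarith)]
          ring
  -- splitting of ∫ F
  have hεpos : ∀ n : ℕ, (0:ℝ) < 1/(n+1) := fun n => by positivity
  have hεM : ∀ n : ℕ, (1:ℝ)/(n+1) ≤ M := by
    intro n
    have h1 : (1:ℝ)/(n+1) ≤ 1 := by
      rw [div_le_one (by positivity)]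
      have : (0:ℝ) ≤ (n:ℝ) := Nat.cast_nonneg n
      linarith
    linarith
  have hdecomp : ∀ n : ℕ, ∫ t : ℝ, F t =
      ((∫ t in Set.Iic (-((1:ℝ)/(n+1))), F t) + ∫ t in Set.Ioc (-((1:ℝ)/(n+1))) ((1:ℝ)/(n+1)), F t)
      + ∫ t in Set.Ioi ((1:ℝ)/(n+1)), F t := by
    intro n
    have h1 : Set.Iic (-((1:ℝ)/(n+1))) ∪ Set.Ioc (-((1:ℝ)/(n+1))) ((1:ℝ)/(n+1)) =
        Set.Iic ((1:ℝ)/(n+1)) := Set.Iic_union_Ioc_eq_Iic (by linarith [hεpos n])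
    have h2 : Set.Iic ((1:ℝ)/(n+1)) ∪ Set.Ioi ((1:ℝ)/(n+1)) = Set.univ := Set.Iic_union_Ioi
    rw [← MeasureTheory.setIntegral_univ, ← h2,
      MeasureTheory.setIntegral_union (Set.Iic_disjoint_Ioi le_rfl) measurableSet_Ioi
        hFint.integrableOn hFint.integrableOn, ← h1,
      MeasureTheory.setIntegral_union (Set.Iic_disjoint_Ioc le_rfl) measurableSet_Ioc
        hFint.integrableOn hFint.integrableOn]
  have hmid0 : Tendsto (fun n : ℕ => ∫ t in Set.Ioc (-((1:ℝ)/(n+1))) ((1:ℝ)/(n+1)), F t)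
      atTop (𝓝 0) := by
    apply squeeze_zero_norm (a := fun n : ℕ => ((b/2) * CD * (2*M') * 2) * ((1:ℝ)/(n+1)))
    · intro n
      have hμ : MeasureTheory.volume (Set.Ioc (-((1:ℝ)/(n+1))) ((1:ℝ)/(n+1))) < ⊤ := by
        rw [Real.volume_Ioc]; exact ENNReal.ofReal_lt_top
      calc ‖∫ t in Set.Ioc (-((1:ℝ)/(n+1))) ((1:ℝ)/(n+1)), F t‖
          ≤ ((b/2) * CD * (2*M')) *
            (MeasureTheory.volume (Set.Ioc (-((1:ℝ)/(n+1))) ((1:ℝ)/(n+1)))).toReal :=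
            MeasureTheory.norm_setIntegral_le_of_norm_le_const hμ (fun t _ => hFbound t)
        _ = ((b/2) * CD * (2*M') * 2) * ((1:ℝ)/(n+1)) := by
            rw [Real.volume_Ioc, ENNReal.toReal_ofReal (by linarith [hεpos n])]
            ring
    · simpa using tendsto_one_div_add_atTop_nhds_zero_nat.const_mul ((b/2) * CD * (2*M') * 2)
  have tend1 : Tendsto (fun n : ℕ =>
      (∫ t in Set.Ioi ((1:ℝ)/(n+1)), F t) + ∫ t in Set.Iic (-((1:ℝ)/(n+1))), F t)
      atTop (𝓝 (∫ t : ℝ, F t)) := by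
    have heq : ∀ n : ℕ, (∫ t in Set.Ioi ((1:ℝ)/(n+1)), F t)
        + (∫ t in Set.Iic (-((1:ℝ)/(n+1))), F t)
        = (∫ t : ℝ, F t) - ∫ t in Set.Ioc (-((1:ℝ)/(n+1))) ((1:ℝ)/(n+1)), F t := by
      intro n
      have := hdecomp n
      linarith
    have h2 : Tendsto (fun n : ℕ =>
        (∫ t : ℝ, F t) - ∫ t in Set.Ioc (-((1:ℝ)/(n+1))) ((1:ℝ)/(n+1)), F t)
        atTop (𝓝 ((∫ t : ℝ, F t) - 0)) := tendsto_const_nhds.sub hmid0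
    rw [sub_zero] at h2
    exact Tendsto.congr (fun n => (heq n).symm) h2
  have tend2 : Tendsto (fun n : ℕ => ∫ s : ℝ,
      ((b/4 + (b/(2*π)) * Real.arctan (s/((1:ℝ)/(n+1)))) *
          (pd 1 φ ![s, (1:ℝ)/(n+1)] + pd 1 φ ![s, -((1:ℝ)/(n+1))])
        + (b/(2*π)) * (s/(s^2+((1:ℝ)/(n+1))^2)) *
          (φ ![s, (1:ℝ)/(n+1)] - φ ![s, -((1:ℝ)/(n+1))])))
      atTop (𝓝 (∫ t : ℝ, F t)) := by
    apply Tendsto.congr ?_ tend1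
    intro n
    rw [hFdef]
    exact claimA b hb hφ hφc hM hM0 (hεpos n) (hεM n)
  have hfinal : ∫ t : ℝ, F t = b * ∫ x₁ in Set.Ioi (0:ℝ), pd 1 φ ![x₁, 0] :=
    tendsto_nhds_unique tend2 (limit_bdry b hb hφ hφc hM hM0)
  rw [hLHS, hfinal]

end Main
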